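/- Let c₁₁, c₂₂, c₃₃, c₄₄, c₅₅, c₆₆ ∈ ℝ and let C be the fourth-order tensor determined through the Voigt map by the symmetric 6×6 matrix whose rows are (c₁₁, −c₆₆, −c₅₅, 0, 0, 0), (−c₆₆, c₂₂, −c₄₄, 0, 0, 0), (−c₅₅, −c₄₄, c₃₃, 0, 0, 0), (0,0,0,c₄₄,0,0), (0,0,0,0,c₅₅,0), (0,0,0,0,0,c₆₆) (Medium I). Then for every n = (n₁,n₂,n₃) ∈ ℝ³ the Christoffel matrix Γ(n) equals the diagonal matrix diag(c₁₁n₁² + c₆₆n₂² + c₅₅n₃², c₆₆n₁² + c₂₂n₂² + c₄₄n₃², c₅₅n₁² + c₄₄n₂² + c₃₃n₃²); in particular the standard basis vectors e₁, e₂, e₃ are eigenvectors of Γ(n) with eigenvalues L₁(n) = c₁₁n₁² + c₆₆n₂² + c₅₅n₃², L₂(n) = c₆₆n₁² + c₂₂n₂² + c₄₄n₃², L₃(n) = c₅₅n₁² + c₄₄n₂² + c₃₃n₃². -/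
import Mathlib


open Finset

/-- The Voigt index map (0-based): `p(0,0)=0, p(1,1)=1, p(2,2)=2`,
`p(1,2)=p(2,1)=3, p(0,2)=p(2,0)=4, p(0,1)=p(1,0)=5`. -/
def voigt (i j : Fin 3) : Fin 6 :=
  if h : i = j then i.castLE (by norm_num)
  else ⟨6 - (i.1 + j.1), by
    have hij : i.1 ≠ j.1 := fun hc => h (Fin.ext hc)
    omega⟩

/-- The fourth-order tensor determined by a 6×6 matrix through the Voigt map. -/
def ofVoigt (μ : Matrix (Fin 6) (Fin 6) ℝ) (i j k l : Fin 3) : ℝ :=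
  μ (voigt i j) (voigt k l)

/-- The Christoffel matrix associated with a fourth-order tensor `C` on `ℝ³`,
with entries `Γ(n)_{ij} = Σ_{k,l} C_{kilj} n_k n_l`. -/
def christoffel (C : Fin 3 → Fin 3 → Fin 3 → Fin 3 → ℝ) (n : Fin 3 → ℝ) :
    Matrix (Fin 3) (Fin 3) ℝ :=
  Matrix.of fun i j => ∑ k, ∑ l, C k i l j * n k * n l


lemma voigt00 : voigt 0 0 = 0 := rfl
lemma voigt01 : voigt 0 1 = 5 := rfl
lemma voigt02 : voigt 0 2 = 4 := rfl
lemma voigt10 : voigt 1 0 = 5 := rfl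
lemma voigt11 : voigt 1 1 = 1 := rfl
lemma voigt12 : voigt 1 2 = 3 := rfl
lemma voigt20 : voigt 2 0 = 4 := rfl
lemma voigt21 : voigt 2 1 = 3 := rfl
lemma voigt22 : voigt 2 2 = 2 := rfl

variable {α : Type*} in
lemma v6_0 (a b c d e f : α) : ![a,b,c,d,e,f] 0 = a := rfl
variable {α : Type*} in
lemma v6_1 (a b c d e f : α) : ![a,b,c,d,e,f] 1 = b := rfl
variable {α : Type*} in
lemma v6_2 (a b c d e f : α) : ![a,b,c,d,e,f] 2 = c := rfl
variable {α : Type*} in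
lemma v6_3 (a b c d e f : α) : ![a,b,c,d,e,f] 3 = d := rfl
variable {α : Type*} in
lemma v6_4 (a b c d e f : α) : ![a,b,c,d,e,f] 4 = e := rfl
variable {α : Type*} in
lemma v6_5 (a b c d e f : α) : ![a,b,c,d,e,f] 5 = f := rfl


variable {α : Type*} in
lemma vc5 (a : α) (u : Fin 5 → α) : Matrix.vecCons a u 5 = u 4 := rfl
variable {α : Type*} in
lemma vc4 (a : α) (u : Fin 4 → α) : Matrix.vecCons a u 4 = u 3 := rfl
variable {α : Type*} in
lemma vc3 (a : α) (u : Fin 3 → α) : Matrix.vecCons a u 3 = u 2 := rfl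
variable {α : Type*} in
lemma vc2 (a : α) (u : Fin 2 → α) : Matrix.vecCons a u 2 = u 1 := rfl
variable {α : Type*} in
lemma vc1 (a : α) (u : Fin 1 → α) : Matrix.vecCons a u 1 = u 0 := rfl
variable {α : Type*} [Zero α] in
lemma vtz (m : ℕ) : Matrix.vecTail (fun _ : Fin (m+1) => (0:α)) = fun _ => 0 := rfl
variable {α : Type*} [Zero α] in
lemma vhz (m : ℕ) : Matrix.vecHead (fun _ : Fin (m+1) => (0:α)) = 0 := rfl

/-- Medium I: for the orthorhombic stiffness tensor given in Voigt form, the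
Christoffel matrix is diagonal, and the standard basis vectors are eigenvectors
with the stated eigenvalues. -/
theorem mediumI_christoffel (c11 c22 c33 c44 c55 c66 : ℝ) (n : Fin 3 → ℝ) :
    christoffel (ofVoigt !![c11, -c66, -c55, 0, 0, 0;
                            -c66, c22, -c44, 0, 0, 0;
                            -c55, -c44, c33, 0, 0, 0;
                            0, 0, 0, c44, 0, 0;
                            0, 0, 0, 0, c55, 0;
                            0, 0, 0, 0, 0, c66]) n =
      Matrix.diagonal ![c11 * n 0 ^ 2 + c66 * n 1 ^ 2 + c55 * n 2 ^ 2,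
                        c66 * n 0 ^ 2 + c22 * n 1 ^ 2 + c44 * n 2 ^ 2,
                        c55 * n 0 ^ 2 + c44 * n 1 ^ 2 + c33 * n 2 ^ 2] ∧
    (christoffel (ofVoigt !![c11, -c66, -c55, 0, 0, 0;
                            -c66, c22, -c44, 0, 0, 0;
                            -c55, -c44, c33, 0, 0, 0;
                            0, 0, 0, c44, 0, 0;
                            0, 0, 0, 0, c55, 0;
                            0, 0, 0, 0, 0, c66]) n).mulVec (Pi.single 0 1) =
      (c11 * n 0 ^ 2 + c66 * n 1 ^ 2 + c55 * n 2 ^ 2) • (Pi.single 0 1 : Fin 3 → ℝ) ∧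
    (christoffel (ofVoigt !![c11, -c66, -c55, 0, 0, 0;
                            -c66, c22, -c44, 0, 0, 0;
                            -c55, -c44, c33, 0, 0, 0;
                            0, 0, 0, c44, 0, 0;
                            0, 0, 0, 0, c55, 0;
                            0, 0, 0, 0, 0, c66]) n).mulVec (Pi.single 1 1) =
      (c66 * n 0 ^ 2 + c22 * n 1 ^ 2 + c44 * n 2 ^ 2) • (Pi.single 1 1 : Fin 3 → ℝ) ∧
    (christoffel (ofVoigt !![c11, -c66, -c55, 0, 0, 0;
                            -c66, c22, -c44, 0, 0, 0;
                            -c55, -c44, c33, 0, 0, 0;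
                            0, 0, 0, c44, 0, 0;
                            0, 0, 0, 0, c55, 0;
                            0, 0, 0, 0, 0, c66]) n).mulVec (Pi.single 2 1) =
      (c55 * n 0 ^ 2 + c44 * n 1 ^ 2 + c33 * n 2 ^ 2) • (Pi.single 2 1 : Fin 3 → ℝ) := by
  have key : christoffel (ofVoigt !![c11, -c66, -c55, 0, 0, 0;
                            -c66, c22, -c44, 0, 0, 0;
                            -c55, -c44, c33, 0, 0, 0;
                            0, 0, 0, c44, 0, 0;
                            0, 0, 0, 0, c55, 0;
                            0, 0, 0, 0, 0, c66]) n =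
      Matrix.diagonal ![c11 * n 0 ^ 2 + c66 * n 1 ^ 2 + c55 * n 2 ^ 2,
                        c66 * n 0 ^ 2 + c22 * n 1 ^ 2 + c44 * n 2 ^ 2,
                        c55 * n 0 ^ 2 + c44 * n 1 ^ 2 + c33 * n 2 ^ 2] := by
    ext i j
    fin_cases i <;> fin_cases j <;>
      simp [christoffel, ofVoigt, Fin.sum_univ_three, Matrix.diagonal,
        voigt00, voigt01, voigt02, voigt10, voigt11, voigt12,
        voigt20, voigt21, voigt22,
        v6_0, v6_1, v6_2, v6_3, v6_4, v6_5, vc5, vc4, vc3, vc2, vc1, Matrix.vecHead, Matrix.vecTail, Function.comp, Matrix.of_apply] <;> ring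
  refine ⟨key, ?_, ?_, ?_⟩ <;> rw [key] <;> ext i <;> fin_cases i <;>
    simp [Matrix.mulVec, dotProduct, Fin.sum_univ_three, Matrix.diagonal,
      Pi.single_apply]
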